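/- arXiv:0901.1908 — 3 statements merged into one kernel-verified Lean document; each statement's English description precedes it below -/
import Mathlib

section
/- Let D be a nice probability measure on ℝ², let Δ and Δ* be triangulations of ℝ², and let {Δ₁, …, Δ_m} be a partition of the set of triangles Δ. Suppose that for every i ∈ {1, …, m} and every triangle t* ∈ Δ*, the number of triangles t ∈ Δ_i whose interior intersects the interior of t* is at most c_i (with c_i ≥ 1). Then H(Δ) ≤ H(Δ*) + H({∪Δ₁, …, ∪Δ_m}) + Σ_{i=1}^m D(∪Δ_i)·log₂(c_i), where ∪Δ_i denotes the union of the triangles in Δ_i. -/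
open MeasureTheory

/-!
Put `p(t, t*) = D(t ∩ t*)` for `t ∈ Δ`, `t* ∈ Δ*`. Boundaries of convex sets are Lebesgue-null,
so `p` is a joint distribution whose marginals are `D(t)`, `D(t*)` and, after grouping `t` by
its class, `D(∪Δᵢ)`. Merging cells only lowers entropy, so `H(Δ) ≤ H(p)`. For fixed `t*` and `i`
at most `cᵢ` of the numbers `p(t, t*)`, `t ∈ Δᵢ`, are nonzero, which costs at most
`D(∪Δᵢ) log cᵢ` when passing from `p` to the joint distribution of (class, `t*`); the entropy
of the latter is at most `H(Δ*) + H({∪Δ₁, …, ∪Δₘ})`.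
-/

/-- A closed halfplane in the plane (possibly degenerate when `(a,b) = (0,0)`). -/
def halfplane (a b c : ℝ) : Set (ℝ × ℝ) := {p | a * p.1 + b * p.2 ≤ c}

/-- A triangle: the intersection of at most 3 closed halfplanes
(taking a degenerate halfplane equal to the whole plane covers "fewer than 3"). -/
def IsTriangle (t : Set (ℝ × ℝ)) : Prop :=
  ∃ a b c : Fin 3 → ℝ, t = ⋂ i, halfplane (a i) (b i) (c i)

/-- A triangulation of the plane: a finite set of triangles with pairwise
disjoint interiors whose union is all of `ℝ²`. -/
structure IsTriangulation (Δ : Finset (Set (ℝ × ℝ))) : Prop where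
  tri : ∀ t ∈ Δ, IsTriangle t
  disj : ∀ t ∈ Δ, ∀ s ∈ Δ, t ≠ s → interior t ∩ interior s = ∅
  cover : ⋃₀ (Δ : Set (Set (ℝ × ℝ))) = Set.univ

/-- The function `x ↦ x·log₂(1/x)`; note that in Lean `0 * logb 2 (1/0) = 0`,
matching the convention `0·log₂(1/0) = 0`. -/
noncomputable def ent (x : ℝ) : ℝ := x * Real.logb 2 (1 / x)

/-- The entropy `H(S) = Σ_{s ∈ S} D(s)·log₂(1/D(s))` of a finite family of sets. -/
noncomputable def Hent (μ : Measure (ℝ × ℝ)) (S : Finset (Set (ℝ × ℝ))) : ℝ :=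
  ∑ s ∈ S, ent (μ s).toReal

open Finset Function Real

lemma convex_halfplane (a b c : ℝ) : Convex ℝ (halfplane a b c) :=
  convex_halfSpace_le (f := fun p : ℝ × ℝ => a * p.1 + b * p.2)
    ⟨fun p q => by simp only [Prod.fst_add, Prod.snd_add]; ring,
      fun r p => by simp only [Prod.smul_fst, Prod.smul_snd, smul_eq_mul]; ring⟩ c

lemma isClosed_halfplane (a b c : ℝ) : IsClosed (halfplane a b c) :=
  isClosed_le (by fun_prop) continuous_const

namespace IsTriangle

lemma convex {t : Set (ℝ × ℝ)} (ht : IsTriangle t) : Convex ℝ t := by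
  obtain ⟨a, b, c, rfl⟩ := ht
  exact convex_iInter fun i => convex_halfplane _ _ _

lemma isClosed {t : Set (ℝ × ℝ)} (ht : IsTriangle t) : IsClosed t := by
  obtain ⟨a, b, c, rfl⟩ := ht
  exact isClosed_iInter fun i => isClosed_halfplane _ _ _

end IsTriangle

section Convex

variable {E : Type*} [NormedAddCommGroup E] [NormedSpace ℝ E] [MeasurableSpace E] [BorelSpace E]
  [FiniteDimensional ℝ E] {ν μ : Measure E} [ν.IsAddHaarMeasure]

lemma Convex.aedisjoint_of_disjoint_interior (hμ : μ ≪ ν) {s t : Set E} (hs : Convex ℝ s)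
    (ht : Convex ℝ t) (h : Disjoint (interior s) (interior t)) : AEDisjoint μ s t := by
  refine measure_mono_null (t := frontier s ∪ frontier t) ?_
    (measure_union_null (hμ (hs.addHaar_frontier ν)) (hμ (ht.addHaar_frontier ν)))
  rintro x ⟨hxs, hxt⟩
  by_cases hx : x ∈ interior s
  · exact .inr ⟨subset_closure hxt, fun hx' => h.ne_of_mem hx hx' rfl⟩
  · exact .inl ⟨subset_closure hxs, hx⟩

lemma card_filter_measure_inter_ne_zero_le_ncard (hμ : μ ≪ ν) {S : Finset (Set E)}
    (hS : ∀ t ∈ S, Convex ℝ t) {s : Set E} (hs : Convex ℝ s) :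
    #{t ∈ S | (μ (t ∩ s)).toReal ≠ 0} ≤
      ({t | t ∈ S ∧ (interior t ∩ interior s).Nonempty} : Set (Set E)).ncard := by
  rw [← Set.ncard_coe_finset]
  refine Set.ncard_le_ncard (fun t ht => ?_) (Set.toFinite _)
  obtain ⟨htS, hne⟩ := mem_filter.mp ht
  refine ⟨htS, Set.nonempty_iff_ne_empty.mpr fun h => hne ?_⟩
  have hnull := Convex.aedisjoint_of_disjoint_interior hμ (hS t htS) hs
    (Set.disjoint_iff_inter_eq_empty.mpr h)
  rw [hnull.eq, ENNReal.toReal_zero]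

end Convex

namespace IsTriangulation

variable {Δ : Finset (Set (ℝ × ℝ))} {μ : Measure (ℝ × ℝ)}

lemma pairwise_aedisjoint (hΔ : IsTriangulation Δ) (hμ : μ ≪ volume) :
    (Δ : Set (Set (ℝ × ℝ))).Pairwise (AEDisjoint μ) :=
  fun t ht s hs hts => Convex.aedisjoint_of_disjoint_interior hμ (hΔ.tri t ht).convex
    (hΔ.tri s hs).convex (Set.disjoint_iff_inter_eq_empty.mpr (hΔ.disj t ht s hs hts))

lemma toReal_measure_sUnion_of_subset [IsFiniteMeasure μ] (hΔ : IsTriangulation Δ)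
    (hμ : μ ≪ volume) {S : Finset (Set (ℝ × ℝ))} (hS : S ⊆ Δ) :
    (μ (⋃₀ (S : Set (Set (ℝ × ℝ))))).toReal = ∑ t ∈ S, (μ t).toReal := by
  rw [Set.sUnion_eq_biUnion, ← ENNReal.toReal_sum fun _ _ => measure_ne_top _ _]
  exact congrArg ENNReal.toReal <|
    measure_biUnion_finset₀ ((hΔ.pairwise_aedisjoint hμ).mono (coe_subset.mpr hS))
      fun t ht => (hΔ.tri t (hS ht)).isClosed.measurableSet.nullMeasurableSet

lemma toReal_measure_eq_sum_inter [IsFiniteMeasure μ] (hΔ : IsTriangulation Δ)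
    (hμ : μ ≪ volume) {A : Set (ℝ × ℝ)} (hA : MeasurableSet A) :
    (μ A).toReal = ∑ t ∈ Δ, (μ (A ∩ t)).toReal := by
  conv_lhs => rw [← Set.inter_univ A, ← hΔ.cover, Set.sUnion_eq_biUnion, Set.inter_iUnion₂]
  rw [← ENNReal.toReal_sum fun _ _ => measure_ne_top _ _]
  exact congrArg ENNReal.toReal <| measure_biUnion_finset₀
    (fun t ht s hs hts => ((hΔ.pairwise_aedisjoint hμ) ht hs hts).mono
      Set.inter_subset_right Set.inter_subset_right)
    fun t ht => (hA.inter (hΔ.tri t ht).isClosed.measurableSet).nullMeasurableSet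

end IsTriangulation

namespace Real

lemma negMulLog_le_neg_mul_log_add_sub {x y : ℝ} (hx : 0 ≤ x) (hy : 0 ≤ y)
    (hxy : y = 0 → x = 0) : negMulLog x ≤ -x * log y + (y - x) := by
  rcases hx.eq_or_lt with rfl | hx
  · simpa using hy
  have hy : 0 < y := hy.lt_of_ne fun h => hx.ne' (hxy h.symm)
  have hlog := log_le_sub_one_of_pos (div_pos hy hx)
  rw [log_div hy.ne' hx.ne'] at hlog
  have := mul_le_mul_of_nonneg_left hlog hx.le
  rw [mul_sub x (y / x), mul_div_cancel₀ _ hx.ne', mul_one] at this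
  rw [negMulLog]
  linarith

lemma negMulLog_sum_le_sum_negMulLog {ι : Type*} (s : Finset ι) {x : ι → ℝ}
    (hx : ∀ j ∈ s, 0 ≤ x j) : negMulLog (∑ j ∈ s, x j) ≤ ∑ j ∈ s, negMulLog (x j) := by
  rw [negMulLog, neg_mul, sum_mul, ← sum_neg_distrib]
  refine sum_le_sum fun j hj => ?_
  rcases (hx j hj).eq_or_lt with h | h
  · simp [← h]
  · have := log_le_log h (single_le_sum hx hj)
    rw [negMulLog]
    nlinarith

lemma sum_negMulLog_le_negMulLog_sum_add_mul_log_card {ι : Type*} (s : Finset ι) {x : ι → ℝ}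
    (hx : ∀ j ∈ s, 0 ≤ x j) :
    ∑ j ∈ s, negMulLog (x j) ≤ negMulLog (∑ j ∈ s, x j) + (∑ j ∈ s, x j) * log #s := by
  rcases s.eq_empty_or_nonempty with rfl | hs
  · simp
  set X := ∑ j ∈ s, x j
  have hn : (0 : ℝ) < #s := by exact_mod_cast hs.card_pos
  have hX : 0 ≤ X := sum_nonneg hx
  have hterm : ∀ j ∈ s, negMulLog (x j) ≤ -x j * log (X / #s) + (X / #s - x j) :=
    fun j hj => negMulLog_le_neg_mul_log_add_sub (hx j hj) (by positivity) fun h =>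
      le_antisymm ((single_le_sum hx hj).trans ((div_eq_zero_iff.mp h).resolve_right hn.ne').le)
        (hx j hj)
  calc ∑ j ∈ s, negMulLog (x j) ≤ ∑ j ∈ s, (-x j * log (X / #s) + (X / #s - x j)) :=
        sum_le_sum hterm
    _ = -X * log (X / #s) := by
        rw [sum_add_distrib, sum_sub_distrib, ← sum_mul, sum_neg_distrib, sum_const,
          nsmul_eq_mul, mul_div_cancel₀ _ hn.ne']
        ring
    _ = negMulLog X + X * log #s := by
        rcases hX.eq_or_lt with h | h
        · simp [← h]
        · rw [log_div h.ne' hn.ne', negMulLog]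
          ring

lemma sum_negMulLog_le_of_card_support_le {ι : Type*} (s : Finset ι) {x : ι → ℝ}
    (hx : ∀ j ∈ s, 0 ≤ x j) {c : ℝ} (hc : (#{j ∈ s | x j ≠ 0} : ℝ) ≤ c) :
    ∑ j ∈ s, negMulLog (x j) ≤ negMulLog (∑ j ∈ s, x j) + (∑ j ∈ s, x j) * log c := by
  have hsupp := sum_negMulLog_le_negMulLog_sum_add_mul_log_card {j ∈ s | x j ≠ 0}
    fun j hj => hx j (mem_filter.mp hj).1
  rw [sum_filter_of_ne (p := fun j => x j ≠ 0) fun j _ h hj => h (by simp [hj]),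
    sum_filter_of_ne (p := fun j => x j ≠ 0) fun j _ h => h] at hsupp
  refine hsupp.trans (add_le_add_right ?_ _)
  rcases (sum_nonneg hx).eq_or_lt with h | h
  · simp [← h]
  obtain ⟨j, hj, hxj⟩ := exists_ne_zero_of_sum_ne_zero h.ne'
  have hcard : (0 : ℝ) < #{j ∈ s | x j ≠ 0} := by
    exact_mod_cast card_pos.mpr ⟨j, mem_filter.mpr ⟨hj, hxj⟩⟩
  exact mul_le_mul_of_nonneg_left (log_le_log hcard hc) h.le

lemma sum_sum_negMulLog_le_sum_negMulLog_marginals {ι κ : Type*} (s : Finset ι) (t : Finset κ)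
    {x : ι → κ → ℝ} (hx : ∀ i ∈ s, ∀ j ∈ t, 0 ≤ x i j) (h1 : ∑ i ∈ s, ∑ j ∈ t, x i j ≤ 1) :
    ∑ i ∈ s, ∑ j ∈ t, negMulLog (x i j) ≤
      ∑ i ∈ s, negMulLog (∑ j ∈ t, x i j) + ∑ j ∈ t, negMulLog (∑ i ∈ s, x i j) := by
  set r := fun i => ∑ j ∈ t, x i j
  set c := fun j => ∑ i ∈ s, x i j
  set T := ∑ i ∈ s, ∑ j ∈ t, x i j
  have hT : 0 ≤ T := sum_nonneg fun i hi => sum_nonneg (hx i hi)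
  have hterm : ∀ i ∈ s, ∀ j ∈ t,
      negMulLog (x i j) ≤ -x i j * log (r i) + -x i j * log (c j) + (r i * c j - x i j) := by
    intro i hi j hj
    have hxr : x i j ≤ r i := single_le_sum (hx i hi) hj
    have hxc : x i j ≤ c j := single_le_sum (fun i hi => hx i hi j hj) hi
    have hgibbs := negMulLog_le_neg_mul_log_add_sub (hx i hi j hj)
      (mul_nonneg ((hx i hi j hj).trans hxr) ((hx i hi j hj).trans hxc)) fun h => by
        rcases mul_eq_zero.mp h with h | h <;> linarith [hx i hi j hj]
    rcases (hx i hi j hj).eq_or_lt with h | h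
    · simpa [← h] using hgibbs
    · rwa [log_mul (h.trans_le hxr).ne' (h.trans_le hxc).ne', mul_add] at hgibbs
  have hrc : ∑ i ∈ s, ∑ j ∈ t, r i * c j = T * T := by
    rw [← sum_mul_sum, show ∑ j ∈ t, c j = T from sum_comm]
  calc ∑ i ∈ s, ∑ j ∈ t, negMulLog (x i j)
      ≤ ∑ i ∈ s, ∑ j ∈ t, (-x i j * log (r i) + -x i j * log (c j) + (r i * c j - x i j)) :=
        sum_le_sum fun i hi => sum_le_sum fun j hj => hterm i hi j hj
    _ = ∑ i ∈ s, negMulLog (r i) + ∑ j ∈ t, negMulLog (c j) + (T * T - T) := by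
        simp only [sum_add_distrib, sum_sub_distrib, hrc]
        rw [sum_comm (f := fun i j => -x i j * log (c j))]
        simp only [← sum_mul, negMulLog, neg_mul, sum_neg_distrib, r, c, T]
    _ ≤ ∑ i ∈ s, negMulLog (r i) + ∑ j ∈ t, negMulLog (c j) := by nlinarith

theorem sum_negMulLog_le_of_partition {α β ι : Type*} [DecidableEq α] [Fintype ι]
    (part : ι → Finset α) (hdisj : Pairwise (Disjoint on part)) (S : Finset β)
    {p : α → β → ℝ} (hp : ∀ t t', 0 ≤ p t t')
    (h1 : ∑ t' ∈ S, ∑ t ∈ univ.biUnion part, p t t' ≤ 1)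
    (c : ι → ℝ) (hcount : ∀ i, ∀ t' ∈ S, (#{t ∈ part i | p t t' ≠ 0} : ℝ) ≤ c i) :
    ∑ t ∈ univ.biUnion part, negMulLog (∑ t' ∈ S, p t t') ≤
      ∑ t' ∈ S, negMulLog (∑ t ∈ univ.biUnion part, p t t')
        + ∑ i, negMulLog (∑ t ∈ part i, ∑ t' ∈ S, p t t')
        + ∑ i, (∑ t ∈ part i, ∑ t' ∈ S, p t t') * log (c i) := by
  have hsplit : ∀ f : α → ℝ, ∑ t ∈ univ.biUnion part, f t = ∑ i, ∑ t ∈ part i, f t :=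
    fun f => sum_biUnion fun i _ j _ hij => hdisj hij
  set Q := fun i t' => ∑ t ∈ part i, p t t'
  have hQ : ∀ i t', 0 ≤ Q i t' := fun i t' => sum_nonneg fun t _ => hp t t'
  have hmarg := sum_sum_negMulLog_le_sum_negMulLog_marginals univ S (x := Q)
    (fun i _ t' _ => hQ i t') (by rw [sum_comm]; simpa only [hsplit] using h1)
  calc ∑ t ∈ univ.biUnion part, negMulLog (∑ t' ∈ S, p t t')
      ≤ ∑ t ∈ univ.biUnion part, ∑ t' ∈ S, negMulLog (p t t') :=
        sum_le_sum fun t _ => negMulLog_sum_le_sum_negMulLog S fun t' _ => hp t t'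
    _ = ∑ i, ∑ t' ∈ S, ∑ t ∈ part i, negMulLog (p t t') := by
        rw [hsplit]
        exact sum_congr rfl fun i _ => sum_comm
    _ ≤ ∑ i, ∑ t' ∈ S, (negMulLog (Q i t') + Q i t' * log (c i)) :=
        sum_le_sum fun i _ => sum_le_sum fun t' ht' =>
          sum_negMulLog_le_of_card_support_le _ (fun t _ => hp t t') (hcount i t' ht')
    _ = ∑ i, ∑ t' ∈ S, negMulLog (Q i t')
          + ∑ i, (∑ t ∈ part i, ∑ t' ∈ S, p t t') * log (c i) := by
        simp only [sum_add_distrib, ← sum_mul, Q]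
        congr 2 with i
        rw [sum_comm]
    _ ≤ _ := by
        gcongr ?_ + _
        have hP : ∀ i, ∑ t' ∈ S, Q i t' = ∑ t ∈ part i, ∑ t' ∈ S, p t t' := fun i => sum_comm
        simpa only [hP, add_comm, hsplit] using hmarg

end Real

lemma ent_eq_negMulLog_div (x : ℝ) : ent x = negMulLog x / log 2 := by
  rw [ent, logb, one_div, log_inv, negMulLog]
  ring

lemma Hent_eq_sum_negMulLog_div (μ : Measure (ℝ × ℝ)) (S : Finset (Set (ℝ × ℝ))) :
    Hent μ S = (∑ s ∈ S, negMulLog (μ s).toReal) / log 2 := by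
  simp only [Hent, ent_eq_negMulLog_div, sum_div]

theorem entropy_lower_bound_partitioned_general
    (μ : Measure (ℝ × ℝ)) [IsProbabilityMeasure μ]
    (hnice : μ ≪ volume)
    (Δ Δstar : Finset (Set (ℝ × ℝ)))
    (hΔ : IsTriangulation Δ) (hΔstar : IsTriangulation Δstar)
    (m : ℕ) (part : Fin m → Finset (Set (ℝ × ℝ)))
    (hdisj : ∀ i j : Fin m, i ≠ j → Disjoint (part i) (part j))
    (hcover : (Δ : Set (Set (ℝ × ℝ))) = ⋃ i, (part i : Set (Set (ℝ × ℝ))))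
    (c : Fin m → ℝ)
    (hcount : ∀ i : Fin m, ∀ tstar ∈ Δstar,
      (({t | t ∈ part i ∧ (interior t ∩ interior tstar).Nonempty} :
          Set (Set (ℝ × ℝ))).ncard : ℝ) ≤ c i) :
    Hent μ Δ ≤ Hent μ Δstar
      + (∑ i : Fin m, ent (μ (⋃₀ (part i : Set (Set (ℝ × ℝ))))).toReal)
      + ∑ i : Fin m, (μ (⋃₀ (part i : Set (Set (ℝ × ℝ))))).toReal * Real.logb 2 (c i) := by
  have hΔ_eq : Δ = univ.biUnion part := coe_injective (by simpa using hcover)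
  have hpart : ∀ i, part i ⊆ Δ := fun i => hΔ_eq ▸ subset_biUnion_of_mem part (mem_univ i)
  set p : Set (ℝ × ℝ) → Set (ℝ × ℝ) → ℝ := fun t t' => (μ (t ∩ t')).toReal
  have hrow : ∀ t ∈ Δ, (μ t).toReal = ∑ t' ∈ Δstar, p t t' := fun t ht =>
    hΔstar.toReal_measure_eq_sum_inter hnice (hΔ.tri t ht).isClosed.measurableSet
  have hcol : ∀ t' ∈ Δstar, (μ t').toReal = ∑ t ∈ Δ, p t t' := fun t' ht' => by
    simp only [p, Set.inter_comm _ t',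
      hΔ.toReal_measure_eq_sum_inter hnice (hΔstar.tri t' ht').isClosed.measurableSet]
  have hP : ∀ i, (μ (⋃₀ (part i : Set (Set (ℝ × ℝ))))).toReal
      = ∑ t ∈ part i, ∑ t' ∈ Δstar, p t t' := fun i => by
    rw [hΔ.toReal_measure_sUnion_of_subset hnice (hpart i)]
    exact sum_congr rfl fun t ht => hrow t (hpart i ht)
  have htotal : ∑ t' ∈ Δstar, ∑ t ∈ Δ, p t t' = 1 := by
    rw [← sum_congr rfl hcol, ← hΔstar.toReal_measure_sUnion_of_subset hnice subset_rfl,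
      hΔstar.cover, measure_univ, ENNReal.toReal_one]
  have hsupp : ∀ i, ∀ t' ∈ Δstar, (#{t ∈ part i | p t t' ≠ 0} : ℝ) ≤ c i := fun i t' ht' =>
    le_trans (Nat.cast_le.mpr (card_filter_measure_inter_ne_zero_le_ncard hnice
      (fun t ht => (hΔ.tri t (hpart i ht)).convex) (hΔstar.tri t' ht').convex))
      (hcount i t' ht')
  have key := sum_negMulLog_le_of_partition part (fun i j => hdisj i j) Δstar
    (fun _ _ => ENNReal.toReal_nonneg) (hΔ_eq ▸ htotal.le) c hsupp
  rw [Hent_eq_sum_negMulLog_div, Hent_eq_sum_negMulLog_div,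
    sum_congr rfl fun t ht => congrArg negMulLog (hrow t ht),
    sum_congr rfl fun t' ht' => congrArg negMulLog (hcol t' ht')]
  simp only [ent_eq_negMulLog_div, logb, hP, ← mul_div_assoc, ← sum_div, ← add_div]
  gcongr
  simpa only [← hΔ_eq] using key

theorem entropy_lower_bound_partitioned
    (μ : Measure (ℝ × ℝ)) [IsProbabilityMeasure μ]
    (hnice : μ ≪ volume)
    (Δ Δstar : Finset (Set (ℝ × ℝ)))
    (hΔ : IsTriangulation Δ) (hΔstar : IsTriangulation Δstar)
    (m : ℕ) (part : Fin m → Finset (Set (ℝ × ℝ)))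
    (hdisj : ∀ i j : Fin m, i ≠ j → Disjoint (part i) (part j))
    (hcover : (Δ : Set (Set (ℝ × ℝ))) = ⋃ i, (part i : Set (Set (ℝ × ℝ))))
    (c : Fin m → ℝ) (hc : ∀ i, 1 ≤ c i)
    (hcount : ∀ i : Fin m, ∀ tstar ∈ Δstar,
      (({t | t ∈ part i ∧ (interior t ∩ interior tstar).Nonempty} :
          Set (Set (ℝ × ℝ))).ncard : ℝ) ≤ c i) :
    Hent μ Δ ≤ Hent μ Δstar
      + (∑ i : Fin m, ent (μ (⋃₀ (part i : Set (Set (ℝ × ℝ))))).toReal)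
      + ∑ i : Fin m, (μ (⋃₀ (part i : Set (Set (ℝ × ℝ))))).toReal * Real.logb 2 (c i) :=
  entropy_lower_bound_partitioned_general μ hnice Δ Δstar hΔ hΔstar m part hdisj hcover c hcount
end

section
/- There exists a universal constant C > 0 such that for every probability distribution p = (p_t)_{t∈T} on a countable set T with finite Shannon entropy H, the entropy of the dyadic-level coarsening satisfies Σ_{i≥1} q_i·log₂(1/q_i) ≤ C·(H^{2/3} + 1), with the convention 0·log₂(1/0) = 0. -/
/-- The total mass of the `i`-th dyadic level set
`G_i = {t : 2^{-i} < p_t ≤ 2^{-(i-1)}}` (for `i ≥ 1`). -/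
noncomputable def dyadicMass {T : Type} (p : T → ℝ) (i : ℕ) : ℝ :=
  ∑' t : {t : T // (2 : ℝ) ^ (-(i : ℤ)) < p t ∧ p t ≤ (2 : ℝ) ^ (-(i : ℤ) + 1)}, p t

/-!
Every `t ∈ G_{i+1}` has `log₂(1/p_t) ≥ i`, so the coarsened distribution `q_{i+1}` on `ℕ` has
first moment `∑ i q_{i+1} ≤ H`. By Gibbs' inequality against a geometric distribution of mean
`H + 1`, a distribution on `ℕ` with first moment at most `H` has entropy at most
`log₂(H + 2) + 2 / ln 2`, and `log₂(H + 2) = O(H^{2/3} + 1)`.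
-/

open Real Function

lemma ent_nonneg {x : ℝ} (h0 : 0 ≤ x) (h1 : x ≤ 1) : 0 ≤ ent x := by
  rcases h0.eq_or_lt with rfl | hx
  · simp [ent]
  · exact mul_nonneg hx.le (logb_nonneg one_lt_two (one_le_one_div hx h1))

/-- Termwise Gibbs inequality, from `log y ≤ y - 1` at `y = r / q`. -/
lemma ent_le_mul_logb_add {q r : ℝ} (hq : 0 ≤ q) (hr : 0 < r) :
    ent q ≤ q * logb 2 (1 / r) + r / log 2 := by
  have hlog2 : 0 < log 2 := log_pos one_lt_two
  rcases hq.eq_or_lt with rfl | hq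
  · simp only [ent, zero_mul, zero_add]
    positivity
  have hsplit : ent q = q * logb 2 (1 / r) + q * log (r / q) / log 2 := by
    rw [ent, logb, logb, log_div hr.ne' hq.ne', one_div, one_div, log_inv, log_inv]
    ring
  have hgap : q * log (r / q) ≤ r :=
    calc q * log (r / q) ≤ q * (r / q - 1) :=
          mul_le_mul_of_nonneg_left (log_le_sub_one_of_pos (by positivity)) hq.le
      _ = r - q := by field_simp
      _ ≤ r := by linarith
  rw [hsplit]
  gcongr

lemma natCast_mul_le_ent {x : ℝ} {n : ℕ} (hx : 0 < x) (hxn : x ≤ 2 ^ (-(n : ℤ))) :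
    n * x ≤ ent x := by
  have hn : (n : ℝ) ≤ logb 2 (1 / x) := by
    rw [le_logb_iff_rpow_le one_lt_two (by positivity), rpow_natCast, one_div,
      le_inv_comm₀ (by positivity) hx, ← zpow_natCast, ← zpow_neg]
    exact hxn
  rw [ent, mul_comm]
  exact mul_le_mul_of_nonneg_left hn hx.le

section PairwiseDisjoint

variable {ι T : Type*} {A : ι → Set T} {g : T → ℝ}

lemma sum_tsum_indicator_le (hA : Pairwise (Disjoint on A)) (hg : 0 ≤ g) (hgs : Summable g)
    (s : Finset ι) : ∑ i ∈ s, ∑' t, (A i).indicator g t ≤ ∑' t, g t := by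
  rw [← Summable.tsum_finsetSum fun i _ => hgs.indicator (A i)]
  refine Summable.tsum_le_tsum (fun t => ?_) (summable_sum fun i _ => hgs.indicator (A i)) hgs
  rw [← Finset.indicator_biUnion_apply s A (hA.set_pairwise _)]
  exact Set.indicator_le_self' (fun t _ => hg t) t

lemma summable_tsum_indicator (hA : Pairwise (Disjoint on A)) (hg : 0 ≤ g) (hgs : Summable g) :
    Summable fun i => ∑' t, (A i).indicator g t :=
  summable_of_sum_le (fun _ => tsum_nonneg (Set.indicator_nonneg fun t _ => hg t))
    (sum_tsum_indicator_le hA hg hgs)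

lemma tsum_tsum_indicator_le (hA : Pairwise (Disjoint on A)) (hg : 0 ≤ g) (hgs : Summable g) :
    ∑' i, ∑' t, (A i).indicator g t ≤ ∑' t, g t :=
  Real.tsum_le_of_sum_le (fun _ => tsum_nonneg (Set.indicator_nonneg fun t _ => hg t))
    (sum_tsum_indicator_le hA hg hgs)

end PairwiseDisjoint

section Dyadic

variable {T : Type} {p : T → ℝ}

/-- The level set `G_i`. -/
def dyadicLevel (p : T → ℝ) (i : ℕ) : Set T :=
  {t | (2 : ℝ) ^ (-(i : ℤ)) < p t ∧ p t ≤ (2 : ℝ) ^ (-(i : ℤ) + 1)}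

lemma dyadicMass_eq_tsum_indicator (p : T → ℝ) (i : ℕ) :
    dyadicMass p i = ∑' t, (dyadicLevel p i).indicator p t :=
  tsum_subtype (dyadicLevel p i) p

lemma dyadicMass_nonneg (hp0 : 0 ≤ p) (i : ℕ) : 0 ≤ dyadicMass p i :=
  tsum_nonneg fun t => hp0 t

lemma pairwise_disjoint_dyadicLevel (p : T → ℝ) : Pairwise (Disjoint on dyadicLevel p) := by
  refine (pairwise_disjoint_on _).2 fun i j hij => Set.disjoint_left.2 fun t hi hj => ?_
  have hexp : -(j : ℤ) + 1 ≤ -(i : ℤ) := by omega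
  linarith [hi.1, hj.2, zpow_le_zpow_right₀ (one_le_two (α := ℝ)) hexp]

lemma pairwise_disjoint_dyadicLevel_succ (p : T → ℝ) :
    Pairwise (Disjoint on fun i => dyadicLevel p (i + 1)) :=
  (pairwise_disjoint_dyadicLevel p).comp_of_injective (add_left_injective 1)

lemma summable_dyadicMass_succ (hp0 : 0 ≤ p) (hp : Summable p) :
    Summable fun i => dyadicMass p (i + 1) := by
  simp only [dyadicMass_eq_tsum_indicator]
  exact summable_tsum_indicator (pairwise_disjoint_dyadicLevel_succ p) hp0 hp

lemma tsum_dyadicMass_succ_le (hp0 : 0 ≤ p) (hp : Summable p) :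
    ∑' i, dyadicMass p (i + 1) ≤ ∑' t, p t := by
  simp only [dyadicMass_eq_tsum_indicator]
  exact tsum_tsum_indicator_le (pairwise_disjoint_dyadicLevel_succ p) hp0 hp

/-- On `G_{i+1}` we have `p_t ≤ 2^{-i}`, i.e. `log₂(1/p_t) ≥ i`. -/
lemma natCast_mul_dyadicMass_succ_le (hp : Summable p) (hse : Summable fun t => ent (p t))
    (i : ℕ) : i * dyadicMass p (i + 1) ≤
      ∑' t, (dyadicLevel p (i + 1)).indicator (fun t => ent (p t)) t := by
  rw [dyadicMass_eq_tsum_indicator, ← tsum_mul_left]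
  refine Summable.tsum_le_tsum (fun t => ?_) ((hp.indicator _).mul_left _) (hse.indicator _)
  by_cases ht : t ∈ dyadicLevel p (i + 1)
  · have hpt : p t ≤ 2 ^ (-(i : ℤ)) := by
      simpa only [Nat.cast_succ, neg_add, neg_add_cancel_right] using ht.2
    simp only [Set.indicator_of_mem ht]
    exact natCast_mul_le_ent (lt_trans (by positivity) ht.1) hpt
  · simp [Set.indicator_of_notMem ht]

lemma summable_natCast_mul_dyadicMass_succ (hp0 : 0 ≤ p) (hp1 : p ≤ 1) (hp : Summable p)
    (hse : Summable fun t => ent (p t)) : Summable fun i : ℕ => i * dyadicMass p (i + 1) :=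
  (summable_tsum_indicator (pairwise_disjoint_dyadicLevel_succ p)
    (fun t => ent_nonneg (hp0 t) (hp1 t)) hse).of_nonneg_of_le
    (fun i => mul_nonneg i.cast_nonneg (dyadicMass_nonneg hp0 _))
    (natCast_mul_dyadicMass_succ_le hp hse)

lemma tsum_natCast_mul_dyadicMass_succ_le (hp0 : 0 ≤ p) (hp1 : p ≤ 1) (hp : Summable p)
    (hse : Summable fun t => ent (p t)) :
    ∑' i : ℕ, i * dyadicMass p (i + 1) ≤ ∑' t, ent (p t) :=
  calc ∑' i : ℕ, i * dyadicMass p (i + 1)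
      ≤ ∑' i, ∑' t, (dyadicLevel p (i + 1)).indicator (fun t => ent (p t)) t :=
        Summable.tsum_le_tsum (natCast_mul_dyadicMass_succ_le hp hse)
          (summable_natCast_mul_dyadicMass_succ hp0 hp1 hp hse)
          (summable_tsum_indicator (pairwise_disjoint_dyadicLevel_succ p)
            (fun t => ent_nonneg (hp0 t) (hp1 t)) hse)
    _ ≤ ∑' t, ent (p t) :=
        tsum_tsum_indicator_le (pairwise_disjoint_dyadicLevel_succ p)
          (fun t => ent_nonneg (hp0 t) (hp1 t)) hse

end Dyadic

/-- Gibbs' inequality against the geometric distribution `r_i = b^i/(M+2)`, `b = (M+1)/(M+2)`,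
whose mean is `M + 1`. -/
theorem tsum_ent_le_logb_add_two {q : ℕ → ℝ} {M : ℝ} (hq0 : ∀ i, 0 ≤ q i) (hq : Summable q)
    (hq1 : ∑' i, q i ≤ 1) (hm : Summable fun i : ℕ => i * q i) (hM : ∑' i : ℕ, i * q i ≤ M) :
    ∑' i, ent (q i) ≤ logb 2 (M + 2) + 2 / log 2 := by
  have hM0 : 0 ≤ M := (tsum_nonneg fun i => mul_nonneg i.cast_nonneg (hq0 i)).trans hM
  have hlog2 : 0 < log 2 := log_pos one_lt_two
  set b := (M + 1) / (M + 2) with hb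
  have hb0 : 0 < b := by positivity
  have hb1 : b < 1 := (div_lt_one (by linarith)).2 (by linarith)
  set L := logb 2 (1 / b) with hL
  have hlogb_r (i : ℕ) : logb 2 (1 / (b ^ i / (M + 2))) = logb 2 (M + 2) + i * L := by
    rw [one_div_div, div_eq_mul_one_div, ← one_div_pow,
      logb_mul (by positivity) (by positivity), logb_pow]
  have hML : L * M ≤ 1 / log 2 := by
    rw [hL, logb, div_mul_eq_mul_div, div_le_div_iff_of_pos_right hlog2]
    calc log (1 / b) * M ≤ (1 / b - 1) * M :=
          mul_le_mul_of_nonneg_right (log_le_sub_one_of_pos (by positivity)) hM0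
      _ = M / (M + 1) := by rw [hb]; field_simp; ring
      _ ≤ 1 := div_le_one_of_le₀ (by linarith) (by linarith)
  have hterm (i : ℕ) :
      ent (q i) ≤ logb 2 (M + 2) * q i + L * (i * q i) + b ^ i / (M + 2) / log 2 := by
    have := ent_le_mul_logb_add (hq0 i) (by positivity : 0 < b ^ i / (M + 2))
    rw [hlogb_r] at this
    linarith
  have hgeom : HasSum (fun i => b ^ i / (M + 2) / log 2) (1 / log 2) := by
    have h := ((hasSum_geometric_of_lt_one hb0.le hb1).div_const (M + 2)).div_const (log 2)
    rwa [show (1 - b)⁻¹ / (M + 2) = 1 by rw [hb]; field_simp; ring] at h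
  have hbound := ((hq.hasSum.mul_left (logb 2 (M + 2))).add (hm.hasSum.mul_left L)).add hgeom
  have hq_le_one (i : ℕ) : q i ≤ 1 := (hq.le_tsum i fun j _ => hq0 j).trans hq1
  have hent : Summable fun i => ent (q i) :=
    hbound.summable.of_nonneg_of_le (fun i => ent_nonneg (hq0 i) (hq_le_one i)) hterm
  calc ∑' i, ent (q i)
      ≤ logb 2 (M + 2) * ∑' i, q i + L * ∑' i : ℕ, i * q i + 1 / log 2 :=
        hasSum_le hterm hent.hasSum hbound
    _ ≤ logb 2 (M + 2) * 1 + L * M + 1 / log 2 := by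
        have hL0 : 0 ≤ L := logb_nonneg one_lt_two (one_le_one_div hb0 hb1.le)
        gcongr
        exact logb_nonneg one_lt_two (by linarith)
    _ ≤ logb 2 (M + 2) + 2 / log 2 := by linarith [show 2 / log 2 = 1 / log 2 + 1 / log 2 by ring]

lemma logb_add_two_add_le {x : ℝ} (hx : 0 ≤ x) :
    logb 2 (x + 2) + 2 / log 2 ≤ 10 * (x ^ (2 / 3 : ℝ) + 1) := by
  have hlog2 : 1 / 2 < log 2 := by linarith [log_two_gt_d9]
  have hy : 0 ≤ x ^ (2 / 3 : ℝ) := rpow_nonneg hx _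
  have hlog : log (x + 2) ≤ (x + 2) ^ (2 / 3 : ℝ) / (2 / 3) :=
    log_le_rpow_div (by linarith) (by norm_num)
  have hsub : (x + 2) ^ (2 / 3 : ℝ) ≤ x ^ (2 / 3 : ℝ) + 2 :=
    calc (x + 2) ^ (2 / 3 : ℝ) ≤ x ^ (2 / 3 : ℝ) + 2 ^ (2 / 3 : ℝ) :=
          rpow_add_le_add_rpow hx zero_le_two (by norm_num) (by norm_num)
      _ ≤ x ^ (2 / 3 : ℝ) + 2 ^ (1 : ℝ) := by gcongr <;> norm_num
      _ = x ^ (2 / 3 : ℝ) + 2 := by rw [rpow_one]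
  rw [logb, ← add_div, div_le_iff₀ (by linarith)]
  nlinarith [mul_le_mul_of_nonneg_left hlog2.le (by linarith : 0 ≤ x ^ (2 / 3 : ℝ) + 1)]

/-- The entropy of the dyadic-level coarsening of a countable distribution is
`O(H^{2/3} + 1)` where `H` is the Shannon entropy of the distribution. -/
theorem dyadic_coarsening_entropy :
    ∃ C : ℝ, 0 < C ∧
      ∀ (T : Type) [Countable T] (p : T → ℝ),
        (∀ t, 0 ≤ p t) → HasSum p 1 →
        Summable (fun t => ent (p t)) →
        (∑' i : ℕ, ent (dyadicMass p (i + 1))) ≤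
          C * ((∑' t, ent (p t)) ^ (2 / 3 : ℝ) + 1) := by
  refine ⟨10, by norm_num, fun T _ p hp0 hp hse => ?_⟩
  have hp1 (t : T) : p t ≤ 1 := le_hasSum hp t fun j _ => hp0 j
  have hH : 0 ≤ ∑' t, ent (p t) := tsum_nonneg fun t => ent_nonneg (hp0 t) (hp1 t)
  calc ∑' i : ℕ, ent (dyadicMass p (i + 1))
      ≤ logb 2 (∑' t, ent (p t) + 2) + 2 / log 2 :=
        tsum_ent_le_logb_add_two (fun i => dyadicMass_nonneg hp0 _)
          (summable_dyadicMass_succ hp0 hp.summable)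
          (hp.tsum_eq ▸ tsum_dyadicMass_succ_le hp0 hp.summable)
          (summable_natCast_mul_dyadicMass_succ hp0 hp1 hp.summable hse)
          (tsum_natCast_mul_dyadicMass_succ_le hp0 hp1 hp.summable hse)
    _ ≤ 10 * ((∑' t, ent (p t)) ^ (2 / 3 : ℝ) + 1) := logb_add_two_add_le hH
end

section
/- Let μ be a probability measure on ℝ² that is absolutely continuous with respect to Lebesgue measure, let t ⊆ ℝ² be a triangle, and let x ∈ ℝ² be any point. Then there exists a line ℓ through x such that, letting h₀ and h₁ denote the two open halfplanes bounded by ℓ, one has μ(t ∩ h₀) ≤ μ(t)/2 and μ(t ∩ h₁) ≤ μ(t)/2. -/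
open MeasureTheory

/-!
Rotate a line through `x`, letting `F θ` be the measure of `t` on the positive side of the line
with unit normal `(cos θ, sin θ)`. Absolute continuity makes every line null, so `F` is
continuous (dominated convergence applied to indicators) and `F θ + F (θ + π) = μ t`. Hence
`θ ↦ F θ - F (θ + π)` is continuous and antiperiodic with antiperiod `π`; by the intermediate
value theorem it vanishes at some `θ`, and that line halves `μ` restricted to `t`.
-/

open Set

theorem MeasureTheory.Measure.addHaar_setOf_apply_sub_eq_zero {E : Type*} [NormedAddCommGroup E]
    [NormedSpace ℝ E] [MeasurableSpace E] [BorelSpace E] [FiniteDimensional ℝ E]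
    (μ : Measure E) [μ.IsAddHaarMeasure] {ℓ : E →ₗ[ℝ] ℝ} (hℓ : ℓ ≠ 0) (x : E) :
    μ {p | ℓ (p - x) = 0} = 0 := by
  have hker : LinearMap.ker ℓ ≠ ⊤ := by rwa [Ne, LinearMap.ker_eq_top]
  have hline : {p | ℓ (p - x) = 0} = (· + -x) ⁻¹' LinearMap.ker ℓ := by
    ext p; simp [sub_eq_add_neg]
  rw [hline, measure_preimage_add_right]
  exact Measure.addHaar_submodule μ _ hker

theorem continuous_measure_setOf_pos {X α : Type*} [TopologicalSpace X]
    [FirstCountableTopology X] [MeasurableSpace α] (ν : Measure α) [IsFiniteMeasure ν]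
    {f : X → α → ℝ} (hf : ∀ p, Continuous (f · p)) (hmeas : ∀ x, Measurable (f x))
    (hnull : ∀ x, ν {p | f x p = 0} = 0) :
    Continuous fun x ↦ ν {p | 0 < f x p} := by
  refine continuous_iff_continuousAt.2 fun x₀ ↦ ?_
  refine tendsto_measure_of_ae_tendsto_indicator_of_isFiniteMeasure _
    (measurableSet_lt measurable_const (hmeas x₀))
    (fun x ↦ measurableSet_lt measurable_const (hmeas x)) ?_
  filter_upwards [measure_eq_zero_iff_ae_notMem.1 (hnull x₀)] with p hp
  rcases (Ne.lt_or_gt hp : f x₀ p < 0 ∨ 0 < f x₀ p) with hneg | hpos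
  · filter_upwards [(hf p).continuousAt.eventually_lt continuousAt_const hneg] with x hx
    exact iff_of_false hx.not_gt hneg.not_gt
  · filter_upwards [continuousAt_const.eventually_lt (hf p).continuousAt hpos] with x hx
    exact iff_of_true hx hpos

theorem Function.Antiperiodic.exists_eq_zero {δ : Type*} [AddCommGroup δ] [LinearOrder δ]
    [IsOrderedAddMonoid δ] [TopologicalSpace δ] [OrderClosedTopology δ] {f : ℝ → δ} {c : ℝ}
    (hf : Function.Antiperiodic f c) (hcont : Continuous f) : ∃ x, f x = 0 := by
  have hzero : (0 : δ) ∈ uIcc (f 0) (f c) := by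
    rw [hf.eq]
    rcases le_total (f 0) 0 with h | h
    · exact mem_uIcc.2 (Or.inl ⟨h, neg_nonneg.2 h⟩)
    · exact mem_uIcc.2 (Or.inr ⟨neg_nonpos.2 h, h⟩)
  obtain ⟨x, -, hx⟩ := intermediate_value_uIcc hcont.continuousOn hzero
  exact ⟨x, hx⟩

theorem measure_setOf_pos_add_measure_setOf_neg {α : Type*} [MeasurableSpace α]
    (ν : Measure α) {g : α → ℝ} (hg : Measurable g) (hnull : ν {p | g p = 0} = 0) :
    ν {p | 0 < g p} + ν {p | g p < 0} = ν univ := by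
  rw [← measure_union _ (measurableSet_lt hg measurable_const)]
  · refine measure_congr (ae_eq_univ.2 (measure_mono_null (fun p hp ↦ ?_) hnull))
    simp only [mem_compl_iff, mem_union, mem_ofPred_eq, not_or, not_lt] at hp
    exact le_antisymm hp.1 hp.2
  · exact disjoint_left.2 fun p (h₁ : 0 < g p) (h₂ : g p < 0) ↦ (h₁.trans h₂).false

noncomputable def lineForm (θ : ℝ) : ℝ × ℝ →ₗ[ℝ] ℝ :=
  Real.cos θ • LinearMap.fst ℝ ℝ ℝ + Real.sin θ • LinearMap.snd ℝ ℝ ℝ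

@[simp]
theorem lineForm_apply (θ : ℝ) (v : ℝ × ℝ) :
    lineForm θ v = Real.cos θ * v.1 + Real.sin θ * v.2 :=
  rfl

theorem lineForm_add_pi (θ : ℝ) : lineForm (θ + Real.pi) = -lineForm θ := by
  ext <;> simp

theorem lineForm_ne_zero (θ : ℝ) : lineForm θ ≠ 0 := fun h ↦ by
  simpa [← sq, Real.cos_sq_add_sin_sq] using LinearMap.congr_fun h (Real.cos θ, Real.sin θ)

theorem exists_halving_lineForm (ν : Measure (ℝ × ℝ)) [IsFiniteMeasure ν] (hν : ν ≪ volume)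
    (x : ℝ × ℝ) :
    ∃ θ, ν {p | 0 < lineForm θ (p - x)} = ν univ / 2 ∧
      ν {p | lineForm θ (p - x) < 0} = ν univ / 2 := by
  have hmeas (θ : ℝ) : Measurable fun p ↦ lineForm θ (p - x) := by
    simp only [lineForm_apply]; fun_prop
  have hnull (θ : ℝ) : ν {p | lineForm θ (p - x) = 0} = 0 :=
    hν (volume.addHaar_setOf_apply_sub_eq_zero (lineForm_ne_zero θ) x)
  have hopp (θ : ℝ) :
      {p | 0 < lineForm (θ + Real.pi) (p - x)} = {p | lineForm θ (p - x) < 0} := by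
    simp only [lineForm_add_pi, LinearMap.neg_apply, neg_pos]
  set F : ℝ → ℝ := fun θ ↦ (ν {p | 0 < lineForm θ (p - x)}).toReal with hF
  have hcont : Continuous F :=
    ENNReal.continuousOn_toReal.comp_continuous
      (continuous_measure_setOf_pos ν (fun p ↦ by simp only [lineForm_apply]; fun_prop)
        hmeas hnull)
      fun θ ↦ measure_ne_top _ _
  have hanti : Function.Antiperiodic (fun θ ↦ F θ - F (θ + Real.pi)) Real.pi := fun θ ↦ by
    simp only [hF, lineForm_add_pi, neg_neg]
    ring
  obtain ⟨θ, hθ⟩ := hanti.exists_eq_zero (hcont.sub (hcont.comp (continuous_add_const _)))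
  have heq : ν {p | 0 < lineForm θ (p - x)} = ν {p | lineForm θ (p - x) < 0} := by
    rw [← hopp, ← ENNReal.toReal_eq_toReal_iff' (measure_ne_top _ _) (measure_ne_top _ _)]
    exact sub_eq_zero.1 hθ
  have hsum := measure_setOf_pos_add_measure_setOf_neg ν (hmeas θ) (hnull θ)
  rw [← heq] at hsum
  have hhalf : ν {p | 0 < lineForm θ (p - x)} = ν univ / 2 := by
    rw [ENNReal.eq_div_iff two_ne_zero ENNReal.ofNat_ne_top, two_mul, hsum]
  exact ⟨θ, hhalf, heq ▸ hhalf⟩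

theorem halving_line_through_point_general
    (μ : Measure (ℝ × ℝ)) [IsProbabilityMeasure μ] (hac : μ ≪ volume)
    (t : Set (ℝ × ℝ)) (x : ℝ × ℝ) :
    ∃ a b : ℝ, (a, b) ≠ ((0 : ℝ), (0 : ℝ)) ∧
      μ (t ∩ {p : ℝ × ℝ | 0 < a * (p.1 - x.1) + b * (p.2 - x.2)}) ≤ μ t / 2 ∧
      μ (t ∩ {p : ℝ × ℝ | a * (p.1 - x.1) + b * (p.2 - x.2) < 0}) ≤ μ t / 2 := by
  obtain ⟨θ, hpos, hneg⟩ :=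
    exists_halving_lineForm (μ.restrict t) (Measure.absolutelyContinuous_restrict.trans hac) x
  rw [Measure.restrict_apply_univ] at hpos hneg
  refine ⟨Real.cos θ, Real.sin θ, fun h ↦ ?_, ?_, ?_⟩
  · rw [Prod.mk.injEq] at h
    simpa [h.1, h.2] using Real.sin_sq_add_cos_sq θ
  · rw [inter_comm]; exact (Measure.le_restrict_apply _ _).trans hpos.le
  · rw [inter_comm]; exact (Measure.le_restrict_apply _ _).trans hneg.le

/-- For any absolutely continuous probability measure, any triangle `t`, and any
point `x`, there is a line through `x` (with normal vector `(a,b) ≠ (0,0)`) whose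
two open halfplanes each contain at most half of the measure of `t`. -/
theorem halving_line_through_point
    (μ : Measure (ℝ × ℝ)) [IsProbabilityMeasure μ] (hac : μ ≪ volume)
    (t : Set (ℝ × ℝ)) (ht : IsTriangle t) (x : ℝ × ℝ) :
    ∃ a b : ℝ, (a, b) ≠ ((0 : ℝ), (0 : ℝ)) ∧
      μ (t ∩ {p : ℝ × ℝ | 0 < a * (p.1 - x.1) + b * (p.2 - x.2)}) ≤ μ t / 2 ∧
      μ (t ∩ {p : ℝ × ℝ | a * (p.1 - x.1) + b * (p.2 - x.2) < 0}) ≤ μ t / 2 :=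
  halving_line_through_point_general μ hac t x
end
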